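/- Fix a₀ ∈ ℝ. Let θ₁, θ₂ : ℝ → ℝ be continuous, nonnegative, and even. Suppose that μ_{θ₁}[f₀; a₀] = μ_{θ₂}[f₀; a₀] for every two-bump initial density f₀ with parameters a₀, c, w, ranging over all c, w with 0 < w < c. Then θ₁ = θ₂. (In other words, measurements of the initial rate of change of the sub-threshold opinion fraction at the single fixed threshold a₀, taken over all two-bump initial opinion densities, uniquely determine the interaction kernel.) -/

import Mathlib

open MeasureTheory Set

/-- The measurement bracket `Ψ_a(x₁,x₂) = 2·𝟙[(x₁+x₂)/2 ≤ a] − 𝟙[x₁ ≤ a] − 𝟙[x₂ ≤ a]`. -/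
noncomputable def Psi (a x₁ x₂ : ℝ) : ℝ :=
  2 * (if (x₁ + x₂) / 2 ≤ a then (1 : ℝ) else 0)
    - (if x₁ ≤ a then (1 : ℝ) else 0) - (if x₂ ≤ a then (1 : ℝ) else 0)

/-- The initial measurement rate `μ_θ[f₀; a]`. -/
noncomputable def mu (θ f₀ : ℝ → ℝ) (a : ℝ) : ℝ :=
  ∫ p : ℝ × ℝ, θ (p.1 - p.2) * f₀ p.1 * f₀ p.2 * Psi a p.1 p.2

/-- The two-bump initial density with parameters `a`, `c`, `w`. -/
noncomputable def twoBump (a c w x : ℝ) : ℝ :=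
  (1 / (2 * w)) * ((Set.Ioo (a - c - w) (a - c)).indicator 1 x
    + (Set.Ioo (a + c - w) (a + c)).indicator 1 x)

/-
The bracket `Ψ_a` vanishes unless the two opinions lie on opposite sides of `a`. For the
two-bump density it is therefore `1` exactly on the two cross rectangles, so `μ_θ` is, up to the
factor `(4w²)⁻¹`, the integral of `θ(x₁ - x₂)` over them; there `|x₁ - x₂|` lies within `w`
of `2c`. For an even continuous `g = θ₁ - θ₂` with `g s ≠ 0` at some `s > 0`, taking `c = s / 2`
and `w` small keeps the sign of `g` on the cross rectangles, so the integral cannot vanish.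
-/

theorem Function.Even.apply_abs {α β : Type*} [AddGroup α] [LinearOrder α] {g : α → β}
    (hg : g.Even) (x : α) : g |x| = g x := by
  rcases abs_choice x with h | h <;> rw [h]
  exact hg x

namespace Psi

variable {a x₁ x₂ : ℝ}

theorem comm (a x₁ x₂ : ℝ) : Psi a x₁ x₂ = Psi a x₂ x₁ := by
  simp only [Psi, add_comm x₁ x₂]
  ring

theorem eq_zero_of_le_of_le (h₁ : x₁ ≤ a) (h₂ : x₂ ≤ a) : Psi a x₁ x₂ = 0 := by
  rw [Psi, if_pos (by linarith), if_pos h₁, if_pos h₂]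
  norm_num

theorem eq_zero_of_lt_of_lt (h₁ : a < x₁) (h₂ : a < x₂) : Psi a x₁ x₂ = 0 := by
  rw [Psi, if_neg (by linarith), if_neg h₁.not_ge, if_neg h₂.not_ge]
  norm_num

theorem eq_one_of_le_of_lt (h₁ : x₁ ≤ a) (h₂ : a < x₂) (h : x₁ + x₂ ≤ 2 * a) :
    Psi a x₁ x₂ = 1 := by
  rw [Psi, if_pos (by linarith), if_pos h₁, if_neg h₂.not_ge]
  norm_num

end Psi

def bumpCross (a c w : ℝ) : Set (ℝ × ℝ) :=
  Ioo (a - c - w) (a - c) ×ˢ Ioo (a + c - w) (a + c) ∪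
    Ioo (a + c - w) (a + c) ×ˢ Ioo (a - c - w) (a - c)

theorem measurableSet_bumpCross {a c w : ℝ} : MeasurableSet (bumpCross a c w) :=
  (measurableSet_Ioo.prod measurableSet_Ioo).union (measurableSet_Ioo.prod measurableSet_Ioo)

section TwoBump

variable {a c w x : ℝ}

theorem twoBump_of_mem_left (hwc : w ≤ c) (hx : x ∈ Ioo (a - c - w) (a - c)) :
    twoBump a c w x = (2 * w)⁻¹ := by
  have hR : x ∉ Ioo (a + c - w) (a + c) := fun h ↦ by linarith [hx.1, hx.2, h.1]
  simp [twoBump, indicator_of_mem hx, indicator_of_notMem hR]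

theorem twoBump_of_mem_right (hwc : w ≤ c) (hx : x ∈ Ioo (a + c - w) (a + c)) :
    twoBump a c w x = (2 * w)⁻¹ := by
  have hL : x ∉ Ioo (a - c - w) (a - c) := fun h ↦ by linarith [hx.1, hx.2, h.2]
  simp [twoBump, indicator_of_mem hx, indicator_of_notMem hL]

theorem twoBump_of_notMem (hL : x ∉ Ioo (a - c - w) (a - c))
    (hR : x ∉ Ioo (a + c - w) (a + c)) : twoBump a c w x = 0 := by
  simp [twoBump, indicator_of_notMem hL, indicator_of_notMem hR]

theorem twoBump_mul_twoBump_mul_Psi (hwc : w ≤ c) (x₁ x₂ : ℝ) :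
    twoBump a c w x₁ * twoBump a c w x₂ * Psi a x₁ x₂ =
      (bumpCross a c w).indicator (fun _ ↦ (4 * w ^ 2)⁻¹) (x₁, x₂) := by
  have hsq : (2 * w)⁻¹ * (2 * w)⁻¹ = (4 * w ^ 2)⁻¹ := by rw [← mul_inv]; ring_nf
  have hL : ∀ x ∈ Ioo (a - c - w) (a - c), x ≤ a := fun x hx ↦ by linarith [hx.1, hx.2]
  have hR : ∀ x ∈ Ioo (a + c - w) (a + c), a < x := fun x hx ↦ by linarith [hx.1, hx.2]
  by_cases hp : (x₁, x₂) ∈ bumpCross a c w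
  · rw [indicator_of_mem hp]
    rcases hp with ⟨h₁, h₂⟩ | ⟨h₁, h₂⟩
    · rw [twoBump_of_mem_left hwc h₁, twoBump_of_mem_right hwc h₂,
        Psi.eq_one_of_le_of_lt (hL _ h₁) (hR _ h₂) (by linarith [h₁.2, h₂.2]), mul_one, hsq]
    · rw [twoBump_of_mem_right hwc h₁, twoBump_of_mem_left hwc h₂, Psi.comm,
        Psi.eq_one_of_le_of_lt (hL _ h₂) (hR _ h₁) (by linarith [h₁.2, h₂.2]), mul_one, hsq]
  · rw [indicator_of_notMem hp]
    simp only [bumpCross, mem_union, mem_prod, not_or, not_and_or] at hp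
    by_cases h₁L : x₁ ∈ Ioo (a - c - w) (a - c)
    · have h₂R := hp.1.resolve_left (not_not.2 h₁L)
      by_cases h₂L : x₂ ∈ Ioo (a - c - w) (a - c)
      · rw [Psi.eq_zero_of_le_of_le (hL _ h₁L) (hL _ h₂L), mul_zero]
      · rw [twoBump_of_notMem h₂L h₂R, mul_zero, zero_mul]
    by_cases h₁R : x₁ ∈ Ioo (a + c - w) (a + c)
    · have h₂L := hp.2.resolve_left (not_not.2 h₁R)
      by_cases h₂R : x₂ ∈ Ioo (a + c - w) (a + c)
      · rw [Psi.eq_zero_of_lt_of_lt (hR _ h₁R) (hR _ h₂R), mul_zero]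
      · rw [twoBump_of_notMem h₂L h₂R, mul_zero, zero_mul]
    rw [twoBump_of_notMem h₁L h₁R, zero_mul, zero_mul]

theorem mu_twoBump (θ : ℝ → ℝ) (hwc : w ≤ c) :
    mu θ (twoBump a c w) a = (4 * w ^ 2)⁻¹ * ∫ p in bumpCross a c w, θ (p.1 - p.2) := by
  have h : ∀ p : ℝ × ℝ, θ (p.1 - p.2) * twoBump a c w p.1 * twoBump a c w p.2 * Psi a p.1 p.2 =
      (bumpCross a c w).indicator (fun p ↦ (4 * w ^ 2)⁻¹ * θ (p.1 - p.2)) p := fun p ↦ by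
    rw [mul_assoc, mul_assoc, ← mul_assoc (twoBump a c w p.1), twoBump_mul_twoBump_mul_Psi hwc,
      indicator_mul_left, mul_comm]
  rw [mu, funext h, integral_indicator measurableSet_bumpCross, integral_const_mul]

end TwoBump

section BumpCross

variable {a c w : ℝ}

theorem isBounded_bumpCross : Bornology.IsBounded (bumpCross a c w) :=
  (Metric.isBounded_Ioo _ _ |>.prod (Metric.isBounded_Ioo _ _)).union
    (Metric.isBounded_Ioo _ _ |>.prod (Metric.isBounded_Ioo _ _))

theorem integrableOn_bumpCross {g : ℝ → ℝ} (hg : Continuous g) :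
    IntegrableOn (fun p : ℝ × ℝ ↦ g (p.1 - p.2)) (bumpCross a c w) :=
  ((hg.comp continuous_sub).locallyIntegrable.integrableOn_isCompact
    isBounded_bumpCross.isCompact_closure).mono_set subset_closure

theorem volume_bumpCross_pos (hw : 0 < w) : 0 < volume (bumpCross a c w) := by
  refine lt_of_lt_of_le ?_ (measure_mono subset_union_left)
  rw [Measure.volume_eq_prod, Measure.prod_prod, Real.volume_Ioo, Real.volume_Ioo]
  exact ENNReal.mul_pos (by simp [hw]) (by simp [hw])

theorem abs_sub_mem_of_mem_bumpCross (hwc : w ≤ c) {p : ℝ × ℝ} (hp : p ∈ bumpCross a c w) :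
    |p.1 - p.2| ∈ Ioo (2 * c - w) (2 * c + w) := by
  rcases hp with ⟨⟨h₁, h₁'⟩, ⟨h₂, h₂'⟩⟩ | ⟨⟨h₁, h₁'⟩, ⟨h₂, h₂'⟩⟩
  · rw [abs_of_neg (by linarith)]
    constructor <;> linarith
  · rw [abs_of_pos (by linarith)]
    constructor <;> linarith

theorem exists_setIntegral_bumpCross_pos (a : ℝ) {g : ℝ → ℝ} (hg : Continuous g) (he : g.Even)
    {s : ℝ} (hs : 0 < s) (hgs : 0 < g s) :
    ∃ c w, 0 < w ∧ w < c ∧ 0 < ∫ p in bumpCross a c w, g (p.1 - p.2) := by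
  obtain ⟨ε, hε, hpos⟩ := Metric.eventually_nhds_iff.1 ((hg.tendsto s).eventually (lt_mem_nhds hgs))
  obtain ⟨w, hw, hwc, hwε⟩ : ∃ w, 0 < w ∧ w < s / 2 ∧ w < ε :=
    ⟨min ε (s / 2) / 2, by positivity, by linarith [min_le_right ε (s / 2)],
      by linarith [min_le_left ε (s / 2)]⟩
  have hpos_on : ∀ p ∈ bumpCross a (s / 2) w, 0 < g (p.1 - p.2) := fun p hp ↦ by
    obtain ⟨h₁, h₂⟩ := abs_sub_mem_of_mem_bumpCross hwc.le hp
    rw [← he.apply_abs]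
    exact hpos (by rw [Real.dist_eq, abs_sub_lt_iff]; constructor <;> linarith)
  refine ⟨s / 2, w, hw, hwc, ?_⟩
  rw [setIntegral_pos_iff_support_of_nonneg_ae
      (ae_restrict_of_forall_mem measurableSet_bumpCross fun p hp ↦ (hpos_on p hp).le)
      (integrableOn_bumpCross hg)]
  exact (volume_bumpCross_pos hw).trans_le (measure_mono fun p hp ↦ ⟨(hpos_on p hp).ne', hp⟩)

theorem eq_zero_of_forall_setIntegral_bumpCross_eq_zero (a : ℝ) {g : ℝ → ℝ} (hg : Continuous g)
    (he : g.Even) (h : ∀ c w, 0 < w → w < c → ∫ p in bumpCross a c w, g (p.1 - p.2) = 0) :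
    g = 0 := by
  have hpos : ∀ s, 0 < s → g s = 0 := by
    intro s hs
    by_contra hne
    rcases lt_or_gt_of_ne hne with hgs | hgs
    · obtain ⟨c, w, hw, hwc, hI⟩ := exists_setIntegral_bumpCross_pos a hg.neg
        (fun r ↦ congrArg Neg.neg (he r)) hs (neg_pos.2 hgs)
      simp only [Pi.neg_apply, integral_neg, h c w hw hwc, neg_zero] at hI
      exact hI.false
    · obtain ⟨c, w, hw, hwc, hI⟩ := exists_setIntegral_bumpCross_pos a hg he hs hgs
      rw [h c w hw hwc] at hI
      exact hI.false
  refine Continuous.ext_on (dense_compl_singleton 0) hg continuous_const fun x hx ↦ ?_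
  rw [← he.apply_abs]
  exact hpos _ (abs_pos.2 hx)

end BumpCross

theorem stmt4_general (a₀ : ℝ) (θ₁ θ₂ : ℝ → ℝ)
    (hθ₁c : Continuous θ₁) (hθ₁e : ∀ r, θ₁ (-r) = θ₁ r)
    (hθ₂c : Continuous θ₂) (hθ₂e : ∀ r, θ₂ (-r) = θ₂ r)
    (hdata : ∀ c w : ℝ, 0 < w → w < c →
      mu θ₁ (twoBump a₀ c w) a₀ = mu θ₂ (twoBump a₀ c w) a₀) :
    θ₁ = θ₂ := by
  refine sub_eq_zero.1 <| eq_zero_of_forall_setIntegral_bumpCross_eq_zero a₀ (hθ₁c.sub hθ₂c)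
    (fun r ↦ by simp only [Pi.sub_apply, hθ₁e r, hθ₂e r]) fun c w hw hwc ↦ ?_
  have h := hdata c w hw hwc
  rw [mu_twoBump θ₁ hwc.le, mu_twoBump θ₂ hwc.le, mul_right_inj' (by positivity)] at h
  simp only [Pi.sub_apply]
  rw [integral_sub (integrableOn_bumpCross hθ₁c) (integrableOn_bumpCross hθ₂c), h, sub_self]

theorem stmt4 (a₀ : ℝ) (θ₁ θ₂ : ℝ → ℝ)
    (hθ₁c : Continuous θ₁) (hθ₁nn : ∀ r, 0 ≤ θ₁ r) (hθ₁e : ∀ r, θ₁ (-r) = θ₁ r)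
    (hθ₂c : Continuous θ₂) (hθ₂nn : ∀ r, 0 ≤ θ₂ r) (hθ₂e : ∀ r, θ₂ (-r) = θ₂ r)
    (hdata : ∀ c w : ℝ, 0 < w → w < c →
      mu θ₁ (twoBump a₀ c w) a₀ = mu θ₂ (twoBump a₀ c w) a₀) :
    θ₁ = θ₂ :=
  stmt4_general a₀ θ₁ θ₂ hθ₁c hθ₁e hθ₂c hθ₂e hdata
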